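/- arXiv:2411.07423 — 3 statements merged into one kernel-verified Lean document; each statement's English description precedes it below -/
import Mathlib

section
/- Let k be a compactly supported smooth symmetric 2-tensor on ℝ² that is divergence-free with respect to the Euclidean metric and has constant trace c. Then c = 0 and k ≡ 0. -/
/-- Partial derivative in direction `i` (0 ↦ x, 1 ↦ y) for functions on `ℝ × ℝ`. -/
noncomputable def pd (i : Fin 2) (f : ℝ × ℝ → ℝ) : ℝ × ℝ → ℝ :=
  fun p => fderiv ℝ f p (if i = 0 then ((1 : ℝ), (0 : ℝ)) else ((0 : ℝ), (1 : ℝ)))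

lemma pd0 (f : ℝ × ℝ → ℝ) (p : ℝ × ℝ) : pd 0 f p = fderiv ℝ f p ((1 : ℝ), (0 : ℝ)) := by
  simp [pd]

lemma pd1 (f : ℝ × ℝ → ℝ) (p : ℝ × ℝ) : pd 1 f p = fderiv ℝ f p ((0 : ℝ), (1 : ℝ)) := by
  simp [pd]

/-- A compactly supported smooth symmetric 2-tensor on `ℝ²` which
is divergence-free for the Euclidean metric and has constant trace `c` must
have `c = 0` and vanish identically. -/
theorem compact_support_constant_trace_vanishes
    (k : Fin 2 → Fin 2 → (ℝ × ℝ → ℝ)) (c : ℝ)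
    (hsmooth : ∀ i j, ContDiff ℝ (⊤ : ℕ∞) (k i j))
    (hsymm : ∀ i j, k i j = k j i)
    (hsupp : ∀ i j, HasCompactSupport (k i j))
    (hdiv : ∀ j : Fin 2, ∀ p : ℝ × ℝ, pd 0 (k 0 j) p + pd 1 (k 1 j) p = 0)
    (htrace : ∀ p : ℝ × ℝ, k 0 0 p + k 1 1 p = c) :
    c = 0 ∧ ∀ i j, ∀ p : ℝ × ℝ, k i j p = 0 := by
  set u := k 0 0 with hu_def
  set v := k 0 1 with hv_def
  -- Step 1: c = 0
  have hc : c = 0 := by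
    have hK : IsCompact (tsupport (k 0 0) ∪ tsupport (k 1 1)) :=
      (hsupp 0 0).union (hsupp 1 1)
    obtain ⟨p, hp⟩ : ∃ p, p ∉ tsupport (k 0 0) ∪ tsupport (k 1 1) := by
      by_contra h
      push_neg at h
      exact hK.ne_univ (Set.eq_univ_of_forall h)
    have h1 : u p = 0 := image_eq_zero_of_notMem_tsupport fun h => hp (Or.inl h)
    have h2 : k 1 1 p = 0 := image_eq_zero_of_notMem_tsupport fun h => hp (Or.inr h)
    have := htrace p
    linarith
  -- k 1 1 = -u
  have hk11 : k 1 1 = fun q => -u q := by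
    funext q
    have := htrace q
    rw [hc] at this
    simp only [hu_def]
    linarith
  have hk10 : k 1 0 = v := (hsymm 1 0)
  have hu : Differentiable ℝ u := (hsmooth 0 0).differentiable (by simp)
  have hv : Differentiable ℝ v := (hsmooth 0 1).differentiable (by simp)
  set e1 : ℝ × ℝ := ((1 : ℝ), (0 : ℝ)) with he1
  set e2 : ℝ × ℝ := ((0 : ℝ), (1 : ℝ)) with he2
  -- Cauchy-Riemann relations
  have hCR1 : ∀ p, fderiv ℝ u p e1 + fderiv ℝ v p e2 = 0 := by
    intro p
    have := hdiv 0 p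
    simpa [pd, hk10] using this
  have hCR2 : ∀ p, fderiv ℝ v p e1 - fderiv ℝ u p e2 = 0 := by
    intro p
    have h := hdiv 1 p
    rw [hk11, pd0, pd1, fderiv_fun_neg] at h
    simp only [ContinuousLinearMap.neg_apply] at h
    simp only [he1, he2]
    linarith
  -- the holomorphic function
  set f : ℂ → ℂ := fun z => (u (z.re, z.im) : ℂ) - (v (z.re, z.im) : ℂ) * Complex.I with hf_def
  have hdiff : Differentiable ℂ f := by
    intro z
    set p : ℝ × ℝ := (z.re, z.im) with hp_def
    set a : ℝ := fderiv ℝ u p e1 with ha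
    set b : ℝ := fderiv ℝ v p e1 with hb
    have hue2 : fderiv ℝ u p e2 = b := by have := hCR2 p; linarith
    have hve2 : fderiv ℝ v p e2 = -a := by have := hCR1 p; linarith
    set w : ℂ := (a : ℂ) - (b : ℂ) * Complex.I with hw
    have hφ : HasFDerivAt (⇑Complex.equivRealProdCLM) (Complex.equivRealProdCLM : ℂ →L[ℝ] ℝ × ℝ) z :=
      (Complex.equivRealProdCLM : ℂ →L[ℝ] ℝ × ℝ).hasFDerivAt
    have hφz : Complex.equivRealProdCLM z = p := rfl
    have hu' : HasFDerivAt (fun z : ℂ => u (Complex.equivRealProdCLM z))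
        ((fderiv ℝ u p).comp (Complex.equivRealProdCLM : ℂ →L[ℝ] ℝ × ℝ)) z := by
      exact ((hu p).hasFDerivAt.comp z hφ)
    have hv' : HasFDerivAt (fun z : ℂ => v (Complex.equivRealProdCLM z))
        ((fderiv ℝ v p).comp (Complex.equivRealProdCLM : ℂ →L[ℝ] ℝ × ℝ)) z := by
      exact ((hv p).hasFDerivAt.comp z hφ)
    have hu'' : HasFDerivAt (fun z : ℂ => ((u (Complex.equivRealProdCLM z) : ℝ) : ℂ))
        (Complex.ofRealCLM.comp ((fderiv ℝ u p).comp (Complex.equivRealProdCLM : ℂ →L[ℝ] ℝ × ℝ))) z :=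
      Complex.ofRealCLM.hasFDerivAt.comp z hu'
    have hv'' : HasFDerivAt (fun z : ℂ => ((v (Complex.equivRealProdCLM z) : ℝ) : ℂ) * Complex.I)
        ((Complex.ofRealCLM.comp ((fderiv ℝ v p).comp
          (Complex.equivRealProdCLM : ℂ →L[ℝ] ℝ × ℝ))).smulRight Complex.I) z := by
      exact (Complex.ofRealCLM.hasFDerivAt.comp z hv').mul_const' Complex.I
    have hL : HasFDerivAt f
        ((Complex.ofRealCLM.comp ((fderiv ℝ u p).comp (Complex.equivRealProdCLM : ℂ →L[ℝ] ℝ × ℝ)))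
          - (Complex.ofRealCLM.comp ((fderiv ℝ v p).comp
              (Complex.equivRealProdCLM : ℂ →L[ℝ] ℝ × ℝ))).smulRight Complex.I) z := by
      exact hu''.sub hv''
    have hDer : HasFDerivAt f ((ContinuousLinearMap.smulRight (1 : ℂ →L[ℂ] ℂ) w)) z := by
      apply hasFDerivAt_of_restrictScalars ℝ hL
      apply ContinuousLinearMap.ext
      intro t
      have ht : (Complex.equivRealProdCLM : ℂ →L[ℝ] ℝ × ℝ) t = t.re • e1 + t.im • e2 := by
        show (t.re, t.im) = _
        simp [he1, he2, Prod.ext_iff]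
      simp only [ContinuousLinearMap.coe_restrictScalars', ContinuousLinearMap.smulRight_apply,
        ContinuousLinearMap.coe_sub', Pi.sub_apply, ContinuousLinearMap.coe_comp',
        Function.comp_apply, ContinuousLinearMap.one_apply, Complex.ofRealCLM_apply]
      rw [ht, map_add, map_add, map_smul, map_smul, map_smul, map_smul]
      rw [hue2, hve2, ← ha, ← hb, hw]
      simp only [smul_eq_mul]
      push_cast
      apply Complex.ext <;> simp [Complex.ext_iff] <;> ring
    exact ((hasDerivAt_iff_hasFDerivAt.mpr hDer)).differentiableAt
  -- analytic continuation from the complement of the support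
  have hfa : AnalyticOnNhd ℂ f Set.univ := (Complex.analyticOnNhd_univ_iff_differentiable).mpr hdiff
  set K : Set (ℝ × ℝ) := tsupport u ∪ tsupport v with hK_def
  have hKc : IsCompact K := (hsupp 0 0).union (hsupp 0 1)
  set S : Set ℂ := ⇑Complex.equivRealProdCLM.symm '' K with hS_def
  have hSc : IsCompact S := hKc.image (Complex.equivRealProdCLM.symm.continuous)
  have hmem : ∀ z : ℂ, z ∉ S → f z = 0 := by
    intro z hz
    have hzK : (z.re, z.im) ∉ K := by
      intro h
      refine hz ⟨(z.re, z.im), h, ?_⟩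
      rw [Complex.equivRealProdCLM_symm_apply]
      simp [Complex.ext_iff]
    have h1 : u (z.re, z.im) = 0 := image_eq_zero_of_notMem_tsupport fun h => hzK (Or.inl h)
    have h2 : v (z.re, z.im) = 0 := image_eq_zero_of_notMem_tsupport fun h => hzK (Or.inr h)
    simp [hf_def, h1, h2]
  obtain ⟨z₀, hz₀⟩ : ∃ z₀, z₀ ∉ S := by
    by_contra h
    push_neg at h
    exact hSc.ne_univ (Set.eq_univ_of_forall h)
  have hev : f =ᶠ[nhds z₀] 0 :=
    Filter.eventuallyEq_of_mem (hSc.isClosed.isOpen_compl.mem_nhds hz₀) fun z hz => hmem z hz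
  have hzero : Set.EqOn f 0 Set.univ :=
    hfa.eqOn_zero_of_preconnected_of_eventuallyEq_zero isPreconnected_univ (Set.mem_univ z₀) hev
  have huv : ∀ p : ℝ × ℝ, u p = 0 ∧ v p = 0 := by
    intro p
    have := hzero (Set.mem_univ ((p.1 : ℂ) + (p.2 : ℂ) * Complex.I))
    simp only [hf_def, Pi.zero_apply] at this
    simp only [Complex.add_re, Complex.ofReal_re, Complex.mul_re, Complex.I_re, Complex.I_im,
      Complex.ofReal_im, Complex.add_im, Complex.mul_im] at this
    norm_num at this
    rw [Complex.ext_iff] at this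
    simp at this
    exact ⟨this.1, this.2⟩
  refine ⟨hc, ?_⟩
  intro i j p
  fin_cases i <;> fin_cases j
  · exact (huv p).1
  · exact (huv p).2
  · show k 1 0 p = 0; rw [hk10]; exact (huv p).2
  · show k 1 1 p = 0; rw [hk11]; simp [(huv p).1]
end

section
/- Let α = 2(N+1) with N ∈ ℕ, and define u_k = c_{2k+1+α} where the odd coefficients satisfy c_k = ((k² − α²)/(k(k−1))) c_{k−2}, with u₀ ≠ 0. Then u_k/u_{k−1} = 1 + 1/(2k) + O(1/k²) as k → ∞, and consequently u_n ∼ C√n for some constant C ≠ 0; in particular Σ u_n diverges, so the odd power series Q(X) = Σ_p c_{2p+1} X^{2p} has radius of convergence 1 and Σ_p c_{2p+1} diverges. -/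
/-!
The coefficients satisfy `u (k + 1) = ρ (k + 1) * u k` with an explicit rational ratio
`ρ k = 1 + 1 / (2k) + O(1 / k²)` that is positive, so `u n / u 0 > 0`. For such a ratio the
increments of `log (u n / u 0) - (1/2) log n` are `O(1 / n²)`, hence summable, so `u n / √n`
converges to a nonzero limit. Then `u n` grows like `√n`: `Σ u n` diverges, while
`Σ c (2p+1) X^(2p)`, a shift of `Σ u n X^(2n)` up to a power of `X`, converges for `|X| < 1`.
-/

open Filter

open Real Asymptotics Topology

lemma abs_log_sub_sub_one_le {x : ℝ} (hx : 0 < x) : |log x - (x - 1)| ≤ (x - 1) ^ 2 / x := by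
  have hlower : 1 - x⁻¹ - (x - 1) = -((x - 1) ^ 2 / x) := by field_simp; ring
  rw [abs_le]
  constructor
  · linarith [one_sub_inv_le_log_of_pos hx]
  · linarith [log_le_sub_one_of_pos hx, (by positivity : 0 ≤ (x - 1) ^ 2 / x)]

lemma isBigO_log_sub_sub_one {α : Type*} {l : Filter α} {f g : α → ℝ}
    (hf : (fun n => f n - 1) =O[l] g) (hg : Tendsto g l (𝓝 0)) :
    (fun n => log (f n) - (f n - 1)) =O[l] fun n => g n ^ 2 := by
  have hf1 : Tendsto f l (𝓝 1) := by
    simpa using (hf.trans_tendsto hg).add_const 1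
  have hsq : (fun n => log (f n) - (f n - 1)) =O[l] fun n => (f n - 1) ^ 2 := by
    refine IsBigO.of_bound 2 ?_
    filter_upwards [hf1.eventually_const_le (by norm_num : (1 / 2 : ℝ) < 1)] with n hn
    rw [Real.norm_eq_abs, Real.norm_eq_abs, abs_of_nonneg (sq_nonneg (f n - 1))]
    calc |log (f n) - (f n - 1)| ≤ (f n - 1) ^ 2 / f n := abs_log_sub_sub_one_le (by linarith)
      _ ≤ 2 * (f n - 1) ^ 2 := by
        rw [div_le_iff₀ (by linarith)]; nlinarith [sq_nonneg (f n - 1)]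
  exact hsq.trans (hf.pow 2)

lemma tendsto_of_summable_succ_sub {f : ℕ → ℝ} (h : Summable fun n => f (n + 1) - f n) :
    Tendsto f atTop (𝓝 (f 0 + ∑' n, (f (n + 1) - f n))) := by
  have := (tendsto_const_nhds (x := f 0)).add h.hasSum.tendsto_sum_nat
  refine this.congr fun n => ?_
  rw [Finset.sum_range_sub]
  ring

lemma isBigO_const_div_natCast_add_one (b : ℝ) :
    (fun n : ℕ => b / (n + 1)) =O[atTop] fun n => 1 / (n : ℝ) := by
  refine IsBigO.of_bound |b| ?_
  filter_upwards [eventually_ge_atTop 1] with n hn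
  have hn0 : (0 : ℝ) < n := by exact_mod_cast hn
  simp only [norm_div, norm_one, Real.norm_eq_abs, Nat.abs_cast, mul_one_div]
  rw [abs_of_pos (by positivity : (0 : ℝ) < n + 1)]
  gcongr
  linarith

lemma isBigO_one_div_natCast_sq :
    (fun n : ℕ => 1 / (n : ℝ) ^ 2) =O[atTop] fun n => 1 / (n : ℝ) := by
  refine IsBigO.of_bound 1 ?_
  filter_upwards [eventually_ge_atTop 1] with n hn
  have hn1 : (1 : ℝ) ≤ n := by exact_mod_cast hn
  rw [one_mul, norm_div, norm_div, norm_one, norm_pow, Real.norm_natCast]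
  gcongr
  nlinarith

theorem exists_tendsto_div_rpow_of_ratio {u : ℕ → ℝ} (hu : ∀ n, 0 < u n) (β : ℝ)
    (h : (fun n : ℕ => u (n + 1) / u n - 1 - β / (n + 1)) =O[atTop]
      fun n => 1 / (n : ℝ) ^ 2) :
    ∃ L, 0 < L ∧ Tendsto (fun n : ℕ => u n / (n : ℝ) ^ β) atTop (𝓝 L) := by
  set w : ℕ → ℝ := fun n => log (u n) - β * log n
  have hinv : Tendsto (fun n : ℕ => 1 / (n : ℝ)) atTop (𝓝 0) :=
    tendsto_one_div_atTop_nhds_zero_nat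
  have hratio : (fun n => u (n + 1) / u n - 1) =O[atTop] fun n => 1 / (n : ℝ) := by
    simpa using
      (h.trans isBigO_one_div_natCast_sq).add (isBigO_const_div_natCast_add_one β)
  have hshrink : (fun n : ℕ => (n : ℝ) / (n + 1) - 1) =O[atTop] fun n => 1 / (n : ℝ) := by
    refine (isBigO_const_div_natCast_add_one (-1)).congr' (.of_forall fun n => ?_) .rfl
    field_simp
    ring
  -- `w (n + 1) - w n = log ρ + β * log (n / (n + 1))` with `ρ = u (n + 1) / u n`; each `log y`
  -- is `y - 1` up to `O(1 / n²)`, and the linear parts cancel by `h`.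
  have hd : Summable fun n => w (n + 1) - w n := by
    have h' : _ =O[atTop] fun n : ℕ => (1 / (n : ℝ)) ^ 2 :=
      h.congr_right fun n => by rw [div_pow, one_pow]
    have hsum := ((isBigO_log_sub_sub_one hratio hinv).add h').add
      ((isBigO_log_sub_sub_one hshrink hinv).const_mul_left β)
    refine summable_of_isBigO_nat (g := fun n : ℕ => (1 / (n : ℝ)) ^ 2)
      (by simp) (hsum.congr' ?_ .rfl)
    filter_upwards [eventually_ge_atTop 1] with n hn
    have hn0 : (0 : ℝ) < n := by exact_mod_cast hn
    simp only [w, Nat.cast_add, Nat.cast_one]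
    rw [log_div (hu _).ne' (hu _).ne', log_div hn0.ne' (by positivity)]
    field_simp
    ring
  refine ⟨exp (w 0 + ∑' n, (w (n + 1) - w n)), exp_pos _, ?_⟩
  refine ((continuous_exp.tendsto _).comp (tendsto_of_summable_succ_sub hd)).congr' ?_
  filter_upwards [eventually_ge_atTop 1] with n hn
  have hn0 : (0 : ℝ) < n := by exact_mod_cast hn
  simp only [Function.comp, w, exp_sub, exp_log (hu n), rpow_def_of_pos hn0, mul_comm]

noncomputable def coeffRatio (a x : ℝ) : ℝ :=
  ((2 * x + 1 + a) ^ 2 - a ^ 2) / ((2 * x + 1 + a) * (2 * x + a))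

lemma coeffRatio_pos {a x : ℝ} (ha : 0 < a) (hx : 0 ≤ x) : 0 < coeffRatio a x := by
  unfold coeffRatio
  apply div_pos <;> nlinarith

lemma coeffRatio_sub_one_sub_inv {a x : ℝ} (ha : 0 ≤ a) (hx : 0 < x) :
    coeffRatio a x - 1 - 1 / (2 * x) =
      -(a * (a + 1) * (2 * x + 1) / (2 * x * ((2 * x + a) * (2 * x + 1 + a)))) := by
  have : 2 * x + a ≠ 0 := by positivity
  have : 2 * x + 1 + a ≠ 0 := by positivity
  unfold coeffRatio
  field_simp
  ring

lemma abs_coeffRatio_sub_one_sub_inv_le {a x : ℝ} (ha : 0 ≤ a) (hx : 0 < x) :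
    |coeffRatio a x - 1 - 1 / (2 * x)| ≤ a * (a + 1) / x ^ 2 := by
  rw [coeffRatio_sub_one_sub_inv ha hx, abs_neg, abs_of_nonneg (by positivity),
    div_le_div_iff₀ (by positivity) (by positivity)]
  have hden : x ^ 2 * (2 * x + 1) ≤ 2 * x * ((2 * x + a) * (2 * x + 1 + a)) := by
    nlinarith [mul_pos hx hx, mul_nonneg (mul_nonneg hx.le hx.le) ha]
  calc a * (a + 1) * (2 * x + 1) * x ^ 2 = a * (a + 1) * (x ^ 2 * (2 * x + 1)) := by ring
    _ ≤ a * (a + 1) * (2 * x * ((2 * x + a) * (2 * x + 1 + a))) := by gcongr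

lemma isBigO_coeffRatio_sub_one_sub_inv {a : ℝ} (ha : 0 ≤ a) :
    (fun n : ℕ => coeffRatio a (n + 1) - 1 - (1 / 2) / (n + 1)) =O[atTop]
      fun n => 1 / (n : ℝ) ^ 2 := by
  refine IsBigO.of_bound (a * (a + 1)) ?_
  filter_upwards [eventually_ge_atTop 1] with n hn
  have hn0 : (0 : ℝ) < n := by exact_mod_cast hn
  have hbound := abs_coeffRatio_sub_one_sub_inv_le ha (by positivity : (0 : ℝ) < n + 1)
  rw [Real.norm_eq_abs, norm_div, norm_one, norm_pow, Real.norm_natCast, mul_one_div]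
  calc |coeffRatio a (n + 1) - 1 - 1 / 2 / (n + 1)|
      = |coeffRatio a (n + 1) - 1 - 1 / (2 * (n + 1))| := by rw [div_div]
    _ ≤ a * (a + 1) / (n + 1) ^ 2 := hbound
    _ ≤ a * (a + 1) / n ^ 2 := by gcongr; linarith

lemma div_pos_of_succ_eq_mul {u r : ℕ → ℝ} (hr : ∀ k, 0 < r k)
    (h : ∀ k, u (k + 1) = r k * u k) (hu0 : u 0 ≠ 0) (n : ℕ) : 0 < u n / u 0 := by
  induction n with
  | zero => rw [div_self hu0]; exact one_pos
  | succ n ih => rw [h, mul_div_assoc]; exact mul_pos (hr n) ih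

lemma isBigO_natCast_of_tendsto_div_sqrt {u : ℕ → ℝ} {C : ℝ}
    (h : Tendsto (fun n : ℕ => u n / √n) atTop (𝓝 C)) : u =O[atTop] fun n => (n : ℝ) := by
  have hsqrt : u =O[atTop] fun n => √(n : ℝ) := by
    refine isBigO_of_div_tendsto_nhds ?_ C h
    filter_upwards [eventually_ge_atTop 1] with n hn h0
    exact absurd h0 (by positivity)
  refine hsqrt.trans (IsBigO.of_bound 1 ?_)
  filter_upwards [eventually_ge_atTop 1] with n hn
  have hn1 : (1 : ℝ) ≤ n := by exact_mod_cast hn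
  rw [one_mul, Real.norm_eq_abs, Real.norm_natCast, abs_of_nonneg (sqrt_nonneg _)]
  exact sqrt_le_self_iff.mpr (Or.inr hn1)

lemma summable_mul_pow_of_isBigO {u : ℕ → ℝ} {k : ℕ}
    (hu : u =O[atTop] fun n => (n : ℝ) ^ k) {y : ℝ} (hy : |y| < 1) :
    Summable fun n => u n * y ^ n :=
  summable_of_isBigO_nat (summable_pow_mul_geometric_of_norm_lt_one k hy)
    (hu.mul (isBigO_refl _ _))

lemma succ_eq_coeffRatio_mul {α : ℕ} {c u : ℕ → ℝ}
    (hrec : ∀ k : ℕ, 2 ≤ k →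
      c k = (((k : ℝ) ^ 2 - (α : ℝ) ^ 2) / ((k : ℝ) * ((k : ℝ) - 1))) * c (k - 2))
    (hu : ∀ k : ℕ, u k = c (2 * k + 1 + α)) (k : ℕ) :
    u (k + 1) = coeffRatio α (k + 1) * u k := by
  rw [hu, hu, hrec _ (by omega), show 2 * (k + 1) + 1 + α - 2 = 2 * k + 1 + α by omega]
  unfold coeffRatio
  push_cast
  ring_nf

/-- with `α = 2(N+1)` and the odd coefficients satisfying
`c_k = ((k² − α²)/(k(k−1))) c_{k−2}`, set `u_k = c_{2k+1+α}` with `u₀ ≠ 0`.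
Then `u_k/u_{k−1} = 1 + 1/(2k) + O(1/k²)`, `u_n ∼ C √n` for some `C ≠ 0`,
the series `Σ u_n` diverges, and consequently the odd power series
`Q(X) = Σ_p c_{2p+1} X^{2p}` has radius of convergence `1` and `Σ_p c_{2p+1}`
diverges. -/
theorem odd_series_asymptotics (N : ℕ) (α : ℕ) (hα : α = 2 * (N + 1))
    (c : ℕ → ℝ)
    (hrec : ∀ k : ℕ, 2 ≤ k →
      c k = (((k : ℝ) ^ 2 - (α : ℝ) ^ 2) / ((k : ℝ) * ((k : ℝ) - 1)))
              * c (k - 2))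
    (u : ℕ → ℝ) (hu : ∀ k : ℕ, u k = c (2 * k + 1 + α))
    (hu0 : u 0 ≠ 0) :
    (∃ C₂ : ℝ, 0 < C₂ ∧ ∀ k : ℕ, 1 ≤ k →
      |u k / u (k - 1) - 1 - 1 / (2 * (k : ℝ))| ≤ C₂ / (k : ℝ) ^ 2) ∧
    (∃ C : ℝ, C ≠ 0 ∧
      Tendsto (fun n : ℕ => u n / Real.sqrt n) atTop (nhds C)) ∧
    ¬ Summable u ∧
    (∀ X : ℝ, |X| < 1 → Summable (fun p : ℕ => c (2 * p + 1) * X ^ (2 * p))) ∧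
    ¬ Summable (fun p : ℕ => c (2 * p + 1)) := by
  have ha : (0 : ℝ) < α := by rw [hα]; positivity
  have hstep := succ_eq_coeffRatio_mul hrec hu
  have hpos := div_pos_of_succ_eq_mul (fun k => coeffRatio_pos ha (by positivity)) hstep hu0
  have hne (k : ℕ) : u k ≠ 0 := fun h => (hpos k).ne' (by rw [h, zero_div])
  have hratio (k : ℕ) : u (k + 1) / u k = coeffRatio α (k + 1) := by
    rw [hstep, mul_div_assoc, div_self (hne k), mul_one]
  obtain ⟨L, hL, hlim⟩ := exists_tendsto_div_rpow_of_ratio hpos (1 / 2)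
    ((isBigO_coeffRatio_sub_one_sub_inv ha.le).congr_left fun n => by
      rw [div_div_div_cancel_right₀ hu0, hratio])
  have hC : Tendsto (fun n : ℕ => u n / √n) atTop (𝓝 (u 0 * L)) :=
    (hlim.const_mul (u 0)).congr fun n => by rw [sqrt_eq_rpow]; field_simp
  have hdiv : ¬ Summable u := fun hs => mul_ne_zero hu0 hL.ne' <| tendsto_nhds_unique hC <|
    hs.tendsto_atTop_zero.div_atTop (tendsto_sqrt_atTop.comp tendsto_natCast_atTop_atTop)
  have hshift (p : ℕ) : c (2 * (p + (N + 1)) + 1) = u p := by rw [hu]; congr 1; omega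
  refine ⟨⟨α * (α + 1), by positivity, fun k hk => ?_⟩,
    ⟨u 0 * L, mul_ne_zero hu0 hL.ne', hC⟩, hdiv, fun X hX => ?_, fun hs => hdiv ?_⟩
  · obtain ⟨k, rfl⟩ := Nat.exists_eq_add_of_le' hk
    rw [Nat.add_sub_cancel, hratio]
    exact_mod_cast abs_coeffRatio_sub_one_sub_inv_le ha.le (by positivity : (0 : ℝ) < k + 1)
  · have hX2 : |X ^ 2| < 1 := by rw [abs_pow]; nlinarith [abs_nonneg X]
    have hO : u =O[atTop] fun n => (n : ℝ) ^ 1 := by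
      simpa using isBigO_natCast_of_tendsto_div_sqrt hC
    refine (summable_nat_add_iff (N + 1)).mp <|
      ((summable_mul_pow_of_isBigO hO hX2).mul_left (X ^ (2 * (N + 1)))).congr fun p => ?_
    rw [hshift, ← pow_mul, mul_add 2 p, pow_add]
    ring
  · exact ((summable_nat_add_iff (N + 1)).mpr hs).congr hshift
end

section
/- Suppose real numbers H⁰, J, H¹, H², C¹, C² satisfy the four inequalities H⁰ + J ≥ √((C² − H¹)² + (C¹ + H²)²), H⁰ − J ≥ √((C² + H¹)² + (C¹ − H²)²), H⁰ + J ≥ √((H² − C¹)² + (H¹ + C²)²), and H⁰ − J ≥ √((H² + C¹)² + (H¹ − C²)²). Then H⁰ ≥ |J| + √(|C|² + |H|² + 2|H¹C² − H²C¹|), where |C|² = (C¹)² + (C²)² and |H|² = (H¹)² + (H²)². -/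
/-- combining the four spinorial inequalities yields
`H⁰ ≥ |J| + √(|C|² + |H|² + 2|H¹C² − H²C¹|)`. -/
theorem mass_lower_bound (H0 J H1 H2 C1 C2 : ℝ)
    (h1 : Real.sqrt ((C2 - H1) ^ 2 + (C1 + H2) ^ 2) ≤ H0 + J)
    (h2 : Real.sqrt ((C2 + H1) ^ 2 + (C1 - H2) ^ 2) ≤ H0 - J)
    (h3 : Real.sqrt ((H2 - C1) ^ 2 + (H1 + C2) ^ 2) ≤ H0 + J)
    (h4 : Real.sqrt ((H2 + C1) ^ 2 + (H1 - C2) ^ 2) ≤ H0 - J) :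
    |J| + Real.sqrt ((C1 ^ 2 + C2 ^ 2) + (H1 ^ 2 + H2 ^ 2)
        + 2 * |H1 * C2 - H2 * C1|) ≤ H0 := by
  rcases abs_cases (H1 * C2 - H2 * C1) with ⟨hd, _⟩ | ⟨hd, _⟩ <;>
    rcases abs_cases J with ⟨hj, _⟩ | ⟨hj, _⟩ <;> rw [hd, hj]
  · rw [show (C1 ^ 2 + C2 ^ 2) + (H1 ^ 2 + H2 ^ 2) + 2 * (H1 * C2 - H2 * C1)
        = (C2 + H1) ^ 2 + (C1 - H2) ^ 2 from by ring]
    linarith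
  · rw [show (C1 ^ 2 + C2 ^ 2) + (H1 ^ 2 + H2 ^ 2) + 2 * (H1 * C2 - H2 * C1)
        = (H2 - C1) ^ 2 + (H1 + C2) ^ 2 from by ring]
    linarith
  · rw [show (C1 ^ 2 + C2 ^ 2) + (H1 ^ 2 + H2 ^ 2) + 2 * -(H1 * C2 - H2 * C1)
        = (H2 + C1) ^ 2 + (H1 - C2) ^ 2 from by ring]
    linarith
  · rw [show (C1 ^ 2 + C2 ^ 2) + (H1 ^ 2 + H2 ^ 2) + 2 * -(H1 * C2 - H2 * C1)
        = (C2 - H1) ^ 2 + (C1 + H2) ^ 2 from by ring]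
    linarith
end
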